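/- The divergence term in eSURE uses the variance of the retained noise, not the total noise: in the setting y₁ = x + n₁, y₂ = y₁ + z with n₁ ~ N(0,σ₁²I), z ~ N(0,σ_z²I) independent, the estimator (1/N)‖y₁ - h(y₂)‖² - σ₁² + (2(σ₁²+σ_z²)/N)∑ᵢ ∂hᵢ(y₂)/∂(y₂)ᵢ (using total variance σ₁²+σ_z² in the divergence term) is biased for the MSE whenever σ_z > 0 and E[∑ᵢ ∂hᵢ(y₂)/∂(y₂)ᵢ] ≠ 0; its bias equals (2σ_z²/N)·E[∑ᵢ ∂hᵢ(y₂)/∂(y₂)ᵢ]. -/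

import Mathlib

/-!
Write `y₁ = x + n₁` and `y₂ = y₁ + z`, and expand
`‖y₁ - h(y₂)‖² = ‖x - h(y₂)‖² + 2⟨n₁, x - h(y₂)⟩ + ‖n₁‖²`. Conditionally on `z`, Stein's lemma
for the Gaussian `n₁` gives `E[n₁ᵢ hᵢ(y₂)] = σ₁² E[∂ᵢhᵢ(y₂)]`, so the cross term contributes
`-2σ₁² E[div h(y₂)]`, while `E‖n₁‖² = Nσ₁²`. Hence the estimator whose divergence term carries
the weight `2τ/N` has expectation `MSE + (2(τ - σ₁²)/N) E[div h(y₂)]`: it is unbiased exactly for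
the retained variance `τ = σ₁²`, and for `τ = σ₁² + σ_z²` its bias is `(2σ_z²/N) E[div h(y₂)]`.

Stein's lemma is Gaussian integration by parts, `φ' = -((t - m)/v) φ` for the density `φ`; in
several variables it follows coordinatewise by Fubini over the remaining coordinates.
-/

open MeasureTheory ProbabilityTheory
open scoped NNReal ENNReal

lemma lipschitzWith_of_norm_fderiv_le {E F : Type*} [NormedAddCommGroup E] [NormedSpace ℝ E]
    [NormedAddCommGroup F] [NormedSpace ℝ F] {f : E → F} {C : ℝ} (hf : Differentiable ℝ f)
    (hC : ∀ x, ‖fderiv ℝ f x‖ ≤ C) : LipschitzWith C.toNNReal f :=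
  lipschitzWith_of_nnnorm_fderiv_le hf fun x => by
    rw [← NNReal.coe_le_coe, coe_nnnorm, Real.coe_toNNReal']
    exact (hC x).trans (le_max_left _ _)

lemma LipschitzWith.memLp_comp {Ω E F : Type*} {mΩ : MeasurableSpace Ω} {μ : Measure Ω}
    [IsFiniteMeasure μ] [NormedAddCommGroup E] [NormedAddCommGroup F] {p : ℝ≥0∞} {K : ℝ≥0}
    {f : E → F} (hf : LipschitzWith K f) {X : Ω → E} (hX : MemLp X p μ) :
    MemLp (fun ω => f (X ω)) p μ := by
  refine ((memLp_const ‖f 0‖).add (hX.norm.const_mul K)).of_le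
    (hf.continuous.comp_aestronglyMeasurable hX.1) (ae_of_all _ fun ω => ?_)
  calc ‖f (X ω)‖ ≤ ‖f 0‖ + ‖f (X ω) - f 0‖ := norm_le_insert' _ _
    _ ≤ ‖f 0‖ + K * ‖X ω‖ := by simpa using hf.norm_sub_le (X ω) 0
    _ ≤ _ := Real.le_norm_self _

lemma memLp_id_pi_gaussianReal {ι : Type*} [Fintype ι] (m : ℝ) (v : ℝ≥0) {p : ℝ≥0∞}
    (hp : p ≠ ∞) : MemLp id p (Measure.pi fun _ : ι => gaussianReal m v) :=
  memLp_pi_iff.2 fun i =>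
    (memLp_id_gaussianReal' p hp).comp_measurePreserving (measurePreserving_eval _ i)

lemma hasDerivAt_gaussianPDFReal (m : ℝ) (v : ℝ≥0) (t : ℝ) :
    HasDerivAt (gaussianPDFReal m v) (-((t - m) / v) * gaussianPDFReal m v t) t := by
  have hq : HasDerivAt (fun x : ℝ => -(x - m) ^ 2 / (2 * v)) (-(2 * (t - m)) / (2 * v)) t := by
    simpa using (((hasDerivAt_id t).sub_const m).pow 2).neg.div_const (2 * (v : ℝ))
  rw [gaussianPDFReal_def]
  refine (hq.exp.const_mul _).congr_deriv ?_
  beta_reduce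
  ring

lemma integrable_gaussianPDFReal_mul {m : ℝ} {v : ℝ≥0} (hv : v ≠ 0) {f : ℝ → ℝ}
    (hf : Integrable f (gaussianReal m v)) :
    Integrable (fun t => gaussianPDFReal m v t * f t) := by
  rw [gaussianReal_of_var_ne_zero _ hv, integrable_withDensity_iff_integrable_smul'
    (measurable_gaussianPDF _ _) (ae_of_all _ fun _ => gaussianPDF_lt_top)] at hf
  simpa [toReal_gaussianPDF] using hf

theorem integral_sub_mul_gaussianReal {m : ℝ} {v : ℝ≥0} {g : ℝ → ℝ} {C : ℝ}
    (hg : Differentiable ℝ g) (hC : ∀ t, |deriv g t| ≤ C) :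
    ∫ t, (t - m) * g t ∂gaussianReal m v = v * ∫ t, deriv g t ∂gaussianReal m v := by
  rcases eq_or_ne v 0 with rfl | hv
  · simp [gaussianReal_zero_var]
  have hgL : MemLp g 2 (gaussianReal m v) :=
    (lipschitzWith_of_norm_fderiv_le hg fun t => by
      rw [← norm_deriv_eq_norm_fderiv]; exact hC t).memLp_comp
        (memLp_id_gaussianReal' 2 ENNReal.ofNat_ne_top)
  have hint : Integrable (fun t => (t - m) * g t) (gaussianReal m v) :=
    ((memLp_id_gaussianReal' 2 ENNReal.ofNat_ne_top).sub (memLp_const m)).integrable_mul hgL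
  have hint' : Integrable (deriv g) (gaussianReal m v) :=
    .of_bound (measurable_deriv g).aestronglyMeasurable C (ae_of_all _ hC)
  have hV : ∀ t, HasDerivAt (fun t => -(v : ℝ) * gaussianPDFReal m v t)
      ((t - m) * gaussianPDFReal m v t) t := by
    intro t
    refine ((hasDerivAt_gaussianPDFReal m v t).const_mul _).congr_deriv ?_
    field_simp
  have ibp := integral_mul_deriv_eq_deriv_mul_of_integrable (fun t _ => (hg t).hasDerivAt)
    (fun t _ => hV t)
    ((integrable_gaussianPDFReal_mul hv hint).congr (ae_of_all _ fun t => by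
      simp only [Pi.mul_apply]; ring))
    (((integrable_gaussianPDFReal_mul hv hint').const_mul (-v)).congr (ae_of_all _ fun t => by
      simp only [Pi.mul_apply]; ring))
    (((integrable_gaussianPDFReal_mul hv (hgL.integrable one_le_two)).const_mul (-v)).congr
      (ae_of_all _ fun t => by simp only [Pi.mul_apply]; ring))
  simp only [integral_gaussianReal_eq_integral_smul hv, smul_eq_mul]
  calc ∫ t, gaussianPDFReal m v t * ((t - m) * g t)
      = ∫ t, g t * ((t - m) * gaussianPDFReal m v t) := by congr 1 with t; ring
    _ = -∫ t, deriv g t * (-v * gaussianPDFReal m v t) := ibp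
    _ = v * ∫ t, gaussianPDFReal m v t * deriv g t := by
      rw [← integral_neg, ← integral_const_mul]; congr 1 with t; ring

lemma norm_apply_single_le {ι F : Type*} [Fintype ι] [DecidableEq ι] [NormedAddCommGroup F]
    [NormedSpace ℝ F] (L : (ι → ℝ) →L[ℝ] F) (i : ι) : ‖L (Pi.single i 1)‖ ≤ ‖L‖ := by
  simpa [Pi.norm_single] using L.le_opNorm (Pi.single i 1)

lemma hasDerivAt_insertNth {n : ℕ} (i : Fin (n + 1)) (r : Fin n → ℝ) (t : ℝ) :
    HasDerivAt (fun t => Fin.insertNth (α := fun _ => ℝ) i t r) (Pi.single i 1) t := by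
  have hupd : (fun t => Fin.insertNth (α := fun _ => ℝ) i t r)
      = Function.update (Fin.insertNth (α := fun _ => ℝ) i 0 r) i := by
    funext t; rw [Fin.update_insertNth]
  exact hupd ▸ hasDerivAt_update _ i t

theorem integral_apply_mul_pi_gaussianReal {n : ℕ} {v : ℝ≥0} {f : (Fin n → ℝ) → ℝ} {C : ℝ}
    (hf : Differentiable ℝ f) (hC : ∀ y, ‖fderiv ℝ f y‖ ≤ C) (c : Fin n → ℝ) (i : Fin n) :
    ∫ a, a i * f (c + a) ∂Measure.pi (fun _ => gaussianReal 0 v)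
      = v * ∫ a, fderiv ℝ f (c + a) (Pi.single i 1)
          ∂Measure.pi (fun _ => gaussianReal 0 v) := by
  obtain ⟨n, rfl⟩ := Nat.exists_eq_add_one_of_ne_zero i.pos.ne'
  have hid : MemLp id 2 (Measure.pi fun _ : Fin (n + 1) => gaussianReal 0 v) :=
    memLp_id_pi_gaussianReal 0 v ENNReal.ofNat_ne_top
  have hbound : ∀ y, |fderiv ℝ f y (Pi.single i 1)| ≤ C := fun y =>
    (norm_apply_single_le _ i).trans (hC y)
  have hL : Integrable (fun a => a i * f (c + a)) (Measure.pi fun _ => gaussianReal 0 v) :=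
    (memLp_pi_iff.1 hid i).integrable_mul
      ((lipschitzWith_of_norm_fderiv_le hf hC).memLp_comp ((memLp_const c).add hid))
  have hR : Integrable (fun a => fderiv ℝ f (c + a) (Pi.single i 1))
      (Measure.pi fun _ => gaussianReal 0 v) :=
    .of_bound ((measurable_fderiv_apply_const ℝ f _).comp
      (measurable_const_add c)).aestronglyMeasurable C (ae_of_all _ fun a => hbound _)
  have hslice (r : Fin n → ℝ) : ∫ t, t * f (c + i.insertNth t r) ∂gaussianReal 0 v
      = v * ∫ t, fderiv ℝ f (c + i.insertNth t r) (Pi.single i 1) ∂gaussianReal 0 v := by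
    have hd (t : ℝ) : HasDerivAt (fun t => f (c + i.insertNth t r))
        (fderiv ℝ f (c + i.insertNth t r) (Pi.single i 1)) t :=
      (hf _).hasFDerivAt.comp_hasDerivAt t ((hasDerivAt_insertNth i r t).const_add c)
    simpa only [sub_zero, fun t => (hd t).deriv] using
      integral_sub_mul_gaussianReal (m := 0) (v := v) (fun t => (hd t).differentiableAt)
        (fun t => (hd t).deriv ▸ hbound _)
  set e := (MeasurableEquiv.piFinSuccAbove (fun _ => ℝ) i).symm
  have he : MeasurePreserving e
      ((gaussianReal 0 v).prod (Measure.pi fun _ => gaussianReal 0 v))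
      (Measure.pi fun _ => gaussianReal 0 v) :=
    (measurePreserving_piFinSuccAbove (fun _ => gaussianReal 0 v) i).symm
  have hL' : Integrable (fun z => e z i * f (c + e z)) _ :=
    (he.integrable_comp_emb e.measurableEmbedding).2 hL
  have hR' : Integrable (fun z => fderiv ℝ f (c + e z) (Pi.single i 1)) _ :=
    (he.integrable_comp_emb e.measurableEmbedding).2 hR
  rw [← he.integral_comp', ← he.integral_comp', integral_prod_symm _ hL',
    integral_prod_symm _ hR', ← integral_const_mul]
  simp only [e, MeasurableEquiv.piFinSuccAbove_symm_apply, Fin.insertNthEquiv_apply,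
    Fin.insertNth_apply_same]
  exact integral_congr_ae (ae_of_all _ hslice)

lemma integral_comp_fst_apply_prod_pi {ι β : Type*} [Fintype ι] [MeasurableSpace β]
    {μ : Measure ℝ} [IsProbabilityMeasure μ] {ν : Measure β} [IsProbabilityMeasure ν]
    {f : ℝ → ℝ} (hf : AEStronglyMeasurable f μ) (i : ι) :
    ∫ p : (ι → ℝ) × β, f (p.1 i) ∂(Measure.pi fun _ => μ).prod ν = ∫ t, f t ∂μ := by
  rw [integral_fun_fst (fun a : ι → ℝ => f (a i)), integral_comp_eval hf]
  simp

section RetainedNoise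

variable {N : ℕ} {v : ℝ≥0} {ν : Measure (Fin N → ℝ)} [IsProbabilityMeasure ν]
  {h : (Fin N → ℝ) → (Fin N → ℝ)} {C : ℝ}

lemma memLp_fst_apply_prod_pi_gaussianReal (i : Fin N) :
    MemLp (fun p : (Fin N → ℝ) × (Fin N → ℝ) => p.1 i) 2
      ((Measure.pi fun _ => gaussianReal 0 v).prod ν) :=
  memLp_pi_iff.1 ((memLp_id_pi_gaussianReal (ι := Fin N) (p := 2) 0 v
    ENNReal.ofNat_ne_top).comp_measurePreserving measurePreserving_fst) i

lemma memLp_apply_add_prod_pi_gaussianReal (hν : MemLp id 2 ν) (hh : Differentiable ℝ h)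
    (hC : ∀ y, ‖fderiv ℝ h y‖ ≤ C) (x : Fin N → ℝ) (i : Fin N) :
    MemLp (fun p : (Fin N → ℝ) × (Fin N → ℝ) => h (x + p.1 + p.2) i) 2
      ((Measure.pi fun _ => gaussianReal 0 v).prod ν) := by
  have hfst := (memLp_id_pi_gaussianReal (ι := Fin N) (p := 2) 0 v
    ENNReal.ofNat_ne_top).comp_measurePreserving (measurePreserving_fst (ν := ν))
  have hsnd := hν.comp_measurePreserving
    (measurePreserving_snd (μ := Measure.pi fun _ : Fin N => gaussianReal 0 v))
  exact memLp_pi_iff.1 ((lipschitzWith_of_norm_fderiv_le hh hC).memLp_comp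
    (((memLp_const x).add hfst).add hsnd)) i

lemma integrable_fderiv_apply_single_apply_prod (hC : ∀ y, ‖fderiv ℝ h y‖ ≤ C)
    (x : Fin N → ℝ) (i : Fin N) :
    Integrable
      (fun p : (Fin N → ℝ) × (Fin N → ℝ) => fderiv ℝ h (x + p.1 + p.2) (Pi.single i 1) i)
      ((Measure.pi fun _ => gaussianReal 0 v).prod ν) := by
  refine .of_bound (((measurable_pi_apply i).comp (measurable_fderiv_apply_const ℝ h _)).comp
    ((measurable_const.add measurable_fst).add measurable_snd)).aestronglyMeasurable C
    (ae_of_all _ fun p => ?_)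
  exact (norm_le_pi_norm _ i).trans ((norm_apply_single_le _ i).trans (hC _))

theorem integral_fst_apply_mul_prod_pi_gaussianReal (hν : MemLp id 2 ν)
    (hh : Differentiable ℝ h) (hC : ∀ y, ‖fderiv ℝ h y‖ ≤ C) (x : Fin N → ℝ) (i : Fin N) :
    ∫ p, p.1 i * h (x + p.1 + p.2) i ∂(Measure.pi fun _ => gaussianReal 0 v).prod ν
      = v * ∫ p, fderiv ℝ h (x + p.1 + p.2) (Pi.single i 1) i
          ∂(Measure.pi fun _ => gaussianReal 0 v).prod ν := by
  have hfd (y) :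
      fderiv ℝ (fun y => h y i) y = (ContinuousLinearMap.proj i).comp (fderiv ℝ h y) :=
    fderiv_apply (hh y) i
  have hCi (y) : ‖fderiv ℝ (fun y => h y i) y‖ ≤ C := by
    rw [hfd]
    exact (ContinuousLinearMap.opNorm_le_bound _ (norm_nonneg _) fun u =>
      (norm_le_pi_norm _ i).trans ((fderiv ℝ h y).le_opNorm u)).trans (hC y)
  have hint : Integrable (fun p : (Fin N → ℝ) × (Fin N → ℝ) => p.1 i * h (x + p.1 + p.2) i)
      ((Measure.pi fun _ => gaussianReal 0 v).prod ν) :=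
    (memLp_fst_apply_prod_pi_gaussianReal i).integrable_mul
      (memLp_apply_add_prod_pi_gaussianReal hν hh hC x i)
  rw [integral_prod_symm _ hint,
    integral_prod_symm _ (integrable_fderiv_apply_single_apply_prod hC x i),
    ← integral_const_mul]
  refine integral_congr_ae (ae_of_all _ fun b => ?_)
  simpa only [add_right_comm x, hfd, ContinuousLinearMap.comp_apply,
    ContinuousLinearMap.proj_apply] using
    integral_apply_mul_pi_gaussianReal (v := v) (differentiable_pi.1 hh i) hCi (x + b) i

theorem integral_sq_add_fst_sub_apply (hν : MemLp id 2 ν) (hh : Differentiable ℝ h)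
    (hC : ∀ y, ‖fderiv ℝ h y‖ ≤ C) (x : Fin N → ℝ) (i : Fin N) :
    ∫ p, ((x + p.1) i - h (x + p.1 + p.2) i) ^ 2
        ∂(Measure.pi fun _ => gaussianReal 0 v).prod ν
      = ∫ p, (x i - h (x + p.1 + p.2) i) ^ 2 ∂(Measure.pi fun _ => gaussianReal 0 v).prod ν
        - 2 * v * ∫ p, fderiv ℝ h (x + p.1 + p.2) (Pi.single i 1) i
            ∂(Measure.pi fun _ => gaussianReal 0 v).prod ν
        + v := by
  have hn := memLp_fst_apply_prod_pi_gaussianReal (v := v) (ν := ν) i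
  have hH := memLp_apply_add_prod_pi_gaussianReal (v := v) hν hh hC x i
  set P : Measure ((Fin N → ℝ) × (Fin N → ℝ)) :=
    (Measure.pi fun _ => gaussianReal 0 v).prod ν
  have hmean : ∫ p, p.1 i ∂P = 0 :=
    (integral_comp_fst_apply_prod_pi aestronglyMeasurable_id i).trans integral_id_gaussianReal
  have hvar : ∫ p, p.1 i ^ 2 ∂P = v :=
    (integral_comp_fst_apply_prod_pi (continuous_pow 2).aestronglyMeasurable i).trans <| by
      simpa [sq] using integral_sub_mul_gaussianReal (m := 0) (v := v) differentiable_id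
        (C := 1) (by simp)
  have hA : Integrable (fun p => (x i - h (x + p.1 + p.2) i) ^ 2) P :=
    ((memLp_const (x i)).sub hH).integrable_sq
  have hB : Integrable (fun p => 2 * x i * p.1 i) P := (hn.integrable one_le_two).const_mul _
  have hD : Integrable (fun p => p.1 i * h (x + p.1 + p.2) i) P := hn.integrable_mul hH
  have hE : Integrable (fun p => p.1 i ^ 2) P := hn.integrable_sq
  have hBD : Integrable (fun p => 2 * x i * p.1 i - 2 * (p.1 i * h (x + p.1 + p.2) i)) P :=
    hB.sub (hD.const_mul 2)
  have hBDE : Integrable (fun p => 2 * x i * p.1 i - 2 * (p.1 i * h (x + p.1 + p.2) i)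
      + p.1 i ^ 2) P := hBD.add hE
  calc ∫ p, ((x + p.1) i - h (x + p.1 + p.2) i) ^ 2 ∂P
      = ∫ p, ((x i - h (x + p.1 + p.2) i) ^ 2 + (2 * x i * p.1 i
          - 2 * (p.1 i * h (x + p.1 + p.2) i) + p.1 i ^ 2)) ∂P := by
        congr 1 with p; simp only [Pi.add_apply]; ring
    _ = _ := by
      rw [integral_add hA hBDE, integral_add hBD hE, integral_sub hB (hD.const_mul 2),
        integral_const_mul, integral_const_mul, hmean, hvar,
        integral_fst_apply_mul_prod_pi_gaussianReal hν hh hC]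
      ring

theorem integral_esure_estimator (hN : 0 < N) (hν : MemLp id 2 ν) (hh : Differentiable ℝ h)
    (hC : ∀ y, ‖fderiv ℝ h y‖ ≤ C) (x : Fin N → ℝ) (σ : ℝ≥0) (τ : ℝ) :
    ∫ p, ((1 / (N : ℝ)) * ∑ i, ((x + p.1) i - h (x + p.1 + p.2) i) ^ 2 - (σ : ℝ) ^ 2
        + (2 * τ / (N : ℝ)) * ∑ i, fderiv ℝ h (x + p.1 + p.2) (Pi.single i 1) i)
      ∂(Measure.pi fun _ => gaussianReal 0 (σ ^ 2)).prod ν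
    = ∫ p, (1 / (N : ℝ)) * ∑ i, (x i - h (x + p.1 + p.2) i) ^ 2
          ∂(Measure.pi fun _ => gaussianReal 0 (σ ^ 2)).prod ν
      + (2 * (τ - (σ : ℝ) ^ 2) / (N : ℝ))
        * ∫ p, ∑ i, fderiv ℝ h (x + p.1 + p.2) (Pi.single i 1) i
            ∂(Measure.pi fun _ => gaussianReal 0 (σ ^ 2)).prod ν := by
  have hn := memLp_fst_apply_prod_pi_gaussianReal (v := σ ^ 2) (ν := ν)
  have hH := memLp_apply_add_prod_pi_gaussianReal (v := σ ^ 2) hν hh hC x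
  have hD := integrable_fderiv_apply_single_apply_prod (v := σ ^ 2) (ν := ν) hC x
  have hcoord := integral_sq_add_fst_sub_apply (v := σ ^ 2) hν hh hC x
  set P : Measure ((Fin N → ℝ) × (Fin N → ℝ)) :=
    (Measure.pi fun _ => gaussianReal 0 (σ ^ 2)).prod ν
  have hR (i : Fin N) : Integrable (fun p => ((x + p.1) i - h (x + p.1 + p.2) i) ^ 2) P :=
    (((memLp_const (x i)).add (hn i)).sub (hH i)).integrable_sq
  have hM (i : Fin N) : Integrable (fun p => (x i - h (x + p.1 + p.2) i) ^ 2) P :=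
    ((memLp_const (x i)).sub (hH i)).integrable_sq
  have hRsum := integrable_finsetSum Finset.univ fun i _ => hR i
  have hDsum := integrable_finsetSum Finset.univ fun i _ => hD i
  have hRc : Integrable (fun p => (1 / (N : ℝ)) * ∑ i, ((x + p.1) i - h (x + p.1 + p.2) i) ^ 2
      - (σ : ℝ) ^ 2) P := (hRsum.const_mul _).sub (integrable_const _)
  rw [integral_add hRc (hDsum.const_mul _),
    integral_sub (hRsum.const_mul _) (integrable_const _),
    integral_const_mul, integral_const_mul, integral_const_mul,
    integral_finsetSum _ fun i _ => hR i, integral_finsetSum _ fun i _ => hM i]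
  simp only [hcoord, Finset.sum_add_distrib, Finset.sum_sub_distrib, ← Finset.mul_sum,
    Finset.sum_const, Finset.card_univ, Fintype.card_fin, integral_const, probReal_univ,
    integral_finsetSum _ fun i _ => hD i]
  field_simp
  push_cast
  ring

end RetainedNoise

theorem esure_wrong_variance_bias_general (N : ℕ) (hN : 0 < N) (x : Fin N → ℝ)
    (σ₁ σz : ℝ≥0)
    (h : (Fin N → ℝ) → (Fin N → ℝ)) (hdiff : ContDiff ℝ 1 h)
    (C : ℝ) (hC : ∀ v : Fin N → ℝ, ‖fderiv ℝ h v‖ ≤ C) :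
    ((∫ p : (Fin N → ℝ) × (Fin N → ℝ),
        ((1 / (N : ℝ)) * ∑ i, ((x + p.1) i - h (x + p.1 + p.2) i) ^ 2
          - (σ₁ : ℝ) ^ 2
          + (2 * ((σ₁ : ℝ) ^ 2 + (σz : ℝ) ^ 2) / (N : ℝ))
            * ∑ i, fderiv ℝ h (x + p.1 + p.2) (Pi.single i 1) i)
      ∂((Measure.pi fun _ : Fin N => gaussianReal 0 (σ₁ ^ 2)).prod
          (Measure.pi fun _ : Fin N => gaussianReal 0 (σz ^ 2))))
      - ∫ p : (Fin N → ℝ) × (Fin N → ℝ),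
          (1 / (N : ℝ)) * ∑ i, (x i - h (x + p.1 + p.2) i) ^ 2
        ∂((Measure.pi fun _ : Fin N => gaussianReal 0 (σ₁ ^ 2)).prod
            (Measure.pi fun _ : Fin N => gaussianReal 0 (σz ^ 2)))
      = (2 * (σz : ℝ) ^ 2 / (N : ℝ))
        * ∫ p : (Fin N → ℝ) × (Fin N → ℝ),
            ∑ i, fderiv ℝ h (x + p.1 + p.2) (Pi.single i 1) i
          ∂((Measure.pi fun _ : Fin N => gaussianReal 0 (σ₁ ^ 2)).prod
              (Measure.pi fun _ : Fin N => gaussianReal 0 (σz ^ 2))))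
    ∧ (0 < σz →
        (∫ p : (Fin N → ℝ) × (Fin N → ℝ),
            ∑ i, fderiv ℝ h (x + p.1 + p.2) (Pi.single i 1) i
          ∂((Measure.pi fun _ : Fin N => gaussianReal 0 (σ₁ ^ 2)).prod
              (Measure.pi fun _ : Fin N => gaussianReal 0 (σz ^ 2)))) ≠ 0 →
        (∫ p : (Fin N → ℝ) × (Fin N → ℝ),
            ((1 / (N : ℝ)) * ∑ i, ((x + p.1) i - h (x + p.1 + p.2) i) ^ 2
              - (σ₁ : ℝ) ^ 2
              + (2 * ((σ₁ : ℝ) ^ 2 + (σz : ℝ) ^ 2) / (N : ℝ))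
                * ∑ i, fderiv ℝ h (x + p.1 + p.2) (Pi.single i 1) i)
          ∂((Measure.pi fun _ : Fin N => gaussianReal 0 (σ₁ ^ 2)).prod
              (Measure.pi fun _ : Fin N => gaussianReal 0 (σz ^ 2))))
          ≠ ∫ p : (Fin N → ℝ) × (Fin N → ℝ),
              (1 / (N : ℝ)) * ∑ i, (x i - h (x + p.1 + p.2) i) ^ 2
            ∂((Measure.pi fun _ : Fin N => gaussianReal 0 (σ₁ ^ 2)).prod
                (Measure.pi fun _ : Fin N => gaussianReal 0 (σz ^ 2)))) := by
  rw [integral_esure_estimator hN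
    (memLp_id_pi_gaussianReal (ι := Fin N) 0 (σz ^ 2) ENNReal.ofNat_ne_top)
    (hdiff.differentiable one_ne_zero) hC x σ₁ ((σ₁ : ℝ) ^ 2 + (σz : ℝ) ^ 2),
    add_sub_cancel_left, add_sub_cancel_left]
  refine ⟨rfl, fun hσz hdiv => ?_⟩
  rw [Ne, add_eq_left]
  exact mul_ne_zero (by positivity) hdiv

/-- Using the total noise variance `σ₁² + σ_z²` (instead of the retained variance `σ₁²`)
in the divergence term of eSURE gives a biased estimator: its bias relative to the MSE
equals `(2σ_z²/N)·E[∑ᵢ ∂hᵢ(y₂)/∂(y₂)ᵢ]`; in particular it is biased whenever `σ_z > 0`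
and the expected divergence is nonzero. -/
theorem esure_wrong_variance_bias (N : ℕ) (hN : 0 < N) (x : Fin N → ℝ)
    (σ₁ σz : ℝ≥0) (hσ₁ : 0 < σ₁)
    (h : (Fin N → ℝ) → (Fin N → ℝ)) (hdiff : ContDiff ℝ 1 h)
    (C : ℝ) (hC : ∀ v : Fin N → ℝ, ‖fderiv ℝ h v‖ ≤ C) :
    ((∫ p : (Fin N → ℝ) × (Fin N → ℝ),
        ((1 / (N : ℝ)) * ∑ i, ((x + p.1) i - h (x + p.1 + p.2) i) ^ 2
          - (σ₁ : ℝ) ^ 2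
          + (2 * ((σ₁ : ℝ) ^ 2 + (σz : ℝ) ^ 2) / (N : ℝ))
            * ∑ i, fderiv ℝ h (x + p.1 + p.2) (Pi.single i 1) i)
      ∂((Measure.pi fun _ : Fin N => gaussianReal 0 (σ₁ ^ 2)).prod
          (Measure.pi fun _ : Fin N => gaussianReal 0 (σz ^ 2))))
      - ∫ p : (Fin N → ℝ) × (Fin N → ℝ),
          (1 / (N : ℝ)) * ∑ i, (x i - h (x + p.1 + p.2) i) ^ 2
        ∂((Measure.pi fun _ : Fin N => gaussianReal 0 (σ₁ ^ 2)).prod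
            (Measure.pi fun _ : Fin N => gaussianReal 0 (σz ^ 2)))
      = (2 * (σz : ℝ) ^ 2 / (N : ℝ))
        * ∫ p : (Fin N → ℝ) × (Fin N → ℝ),
            ∑ i, fderiv ℝ h (x + p.1 + p.2) (Pi.single i 1) i
          ∂((Measure.pi fun _ : Fin N => gaussianReal 0 (σ₁ ^ 2)).prod
              (Measure.pi fun _ : Fin N => gaussianReal 0 (σz ^ 2))))
    ∧ (0 < σz →
        (∫ p : (Fin N → ℝ) × (Fin N → ℝ),
            ∑ i, fderiv ℝ h (x + p.1 + p.2) (Pi.single i 1) i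
          ∂((Measure.pi fun _ : Fin N => gaussianReal 0 (σ₁ ^ 2)).prod
              (Measure.pi fun _ : Fin N => gaussianReal 0 (σz ^ 2)))) ≠ 0 →
        (∫ p : (Fin N → ℝ) × (Fin N → ℝ),
            ((1 / (N : ℝ)) * ∑ i, ((x + p.1) i - h (x + p.1 + p.2) i) ^ 2
              - (σ₁ : ℝ) ^ 2
              + (2 * ((σ₁ : ℝ) ^ 2 + (σz : ℝ) ^ 2) / (N : ℝ))
                * ∑ i, fderiv ℝ h (x + p.1 + p.2) (Pi.single i 1) i)
          ∂((Measure.pi fun _ : Fin N => gaussianReal 0 (σ₁ ^ 2)).prod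
              (Measure.pi fun _ : Fin N => gaussianReal 0 (σz ^ 2))))
          ≠ ∫ p : (Fin N → ℝ) × (Fin N → ℝ),
              (1 / (N : ℝ)) * ∑ i, (x i - h (x + p.1 + p.2) i) ^ 2
            ∂((Measure.pi fun _ : Fin N => gaussianReal 0 (σ₁ ^ 2)).prod
                (Measure.pi fun _ : Fin N => gaussianReal 0 (σz ^ 2)))) :=
  esure_wrong_variance_bias_general N hN x σ₁ σz h hdiff C hC
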